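/- arXiv:2412.13606 — 4 statements merged into one kernel-verified Lean document; each statement's English description precedes it below -/
import Mathlib

section
/- Let φ be a finite set of constraints and for each c ∈ φ introduce a fresh indicator variable a_c, forming the half-reified specification φ' = {a_c → c : c ∈ φ}. Let π be a permutation of the indicator variables {a_c} (extended to literals without crossing polarity), and let π_φ be the induced permutation of constraints (π_φ(c) = c' when π(a_c) = a_{c'}). Then π is a partial A-symmetry of φ' (where A is the set of indicator literals) if and only if π_φ is a constraint symmetry of φ, i.e., for every subset C ⊆ φ, C is satisfiable iff π_φ(C) is satisfiable. -/
/-- A full assignment `μ` of the indicator variables (a partial assignment of the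
half-reified specification `φ' = {a_c → c : c ∈ φ}`) can be extended to a total
assignment (over original variables `V` plus indicators) satisfying `φ'`. -/
def ExtendsToModel {V : Type*} (φ : Finset ((V → Bool) → Prop))
    (μ : {c // c ∈ φ} → Bool) : Prop :=
  ∃ β : (V ⊕ {c // c ∈ φ}) → Bool,
    (∀ c : {c // c ∈ φ}, β (Sum.inr c) = μ c) ∧
    (∀ c : {c // c ∈ φ}, β (Sum.inr c) = true → c.1 (fun v => β (Sum.inl v)))

lemma extendsToModel_iff {V : Type*} (φ : Finset ((V → Bool) → Prop))
    (μ : {c // c ∈ φ} → Bool) :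
    ExtendsToModel φ μ ↔ ∃ α : V → Bool, ∀ c : {c // c ∈ φ}, μ c = true → c.1 α := by
  constructor
  · rintro ⟨β, h1, h2⟩
    exact ⟨fun v => β (Sum.inl v), fun c hc => h2 c (by rw [h1]; exact hc)⟩
  · rintro ⟨α, hα⟩
    exact ⟨Sum.elim α μ, fun c => rfl, fun c hc => hα c hc⟩

/-- A permutation `π` of the indicator variables (which never crosses polarity) is a
partial `A`-symmetry of the half-reified specification iff the induced permutation of
constraints is a constraint symmetry of `φ`: every subset `C ⊆ φ` is satisfiable iff
`π(C)` is satisfiable. -/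
theorem indicator_partial_symmetry_iff_constraint_symmetry {V : Type*}
    (φ : Finset ((V → Bool) → Prop)) (π : Equiv.Perm {c // c ∈ φ}) :
    (∀ μ : {c // c ∈ φ} → Bool,
        ExtendsToModel φ μ ↔ ExtendsToModel φ (μ ∘ π.symm)) ↔
    (∀ C : Set {c // c ∈ φ},
        (∃ α : V → Bool, ∀ c ∈ C, c.1 α) ↔ (∃ α : V → Bool, ∀ c ∈ π '' C, c.1 α)) := by
  classical
  simp only [extendsToModel_iff]
  constructor
  · intro h C
    have := h (fun c => decide (c ∈ C))
    simp only [Function.comp, decide_eq_true_eq] at this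
    refine this.trans ?_
    constructor
    · rintro ⟨α, hα⟩
      refine ⟨α, ?_⟩
      rintro c ⟨d, hd, rfl⟩
      exact hα (π d) (by simpa using hd)
    · rintro ⟨α, hα⟩
      exact ⟨α, fun c hc => hα c ⟨π.symm c, hc, by simp⟩⟩
  · intro h μ
    have := h {c | μ c = true}
    refine this.trans ?_
    constructor
    · rintro ⟨α, hα⟩
      refine ⟨α, fun c hc => hα c ?_⟩
      exact ⟨π.symm c, hc, by simp⟩
    · rintro ⟨α, hα⟩
      refine ⟨α, ?_⟩
      rintro c ⟨d, hd, rfl⟩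
      exact hα (π d) (by simpa using hd)
end

section
/- Let φ be a finite unsatisfiable set of constraints. A subset U ⊆ φ is a minimal unsatisfiable subset (MUS) of φ if and only if U is a minimal hitting set of the collection MCSes(φ) of all minimal correction subsets of φ. -/
def Sat {A : Type*} (S : Set (A → Prop)) : Prop := ∃ a : A, ∀ c ∈ S, c a

def IsMUS {A : Type*} (φ U : Set (A → Prop)) : Prop :=
  U ⊆ φ ∧ ¬ Sat U ∧ ∀ U' ⊂ U, Sat U'

/-- `C` is a minimal correction subset of `φ`. -/
def IsMCS {A : Type*} (φ C : Set (A → Prop)) : Prop :=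
  C ⊆ φ ∧ Sat (φ \ C) ∧ ∀ C' ⊂ C, ¬ Sat (φ \ C')

def IsHittingSet {K : Type*} (F : Set (Set K)) (H : Set K) : Prop :=
  ∀ S ∈ F, (H ∩ S).Nonempty

def IsMinHittingSet {K : Type*} (F : Set (Set K)) (H : Set K) : Prop :=
  IsHittingSet F H ∧ ∀ H' ⊂ H, ¬ IsHittingSet F H'

lemma sat_mono {A : Type*} {S T : Set (A → Prop)} (h : S ⊆ T) : Sat T → Sat S :=
  fun ⟨a, ha⟩ => ⟨a, fun c hc => ha c (h hc)⟩

lemma exists_mcs_disjoint {A : Type*} {φ S : Set (A → Prop)} (hfin : φ.Finite)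
    (hS : S ⊆ φ) (hsat : Sat S) : ∃ C, IsMCS φ C ∧ S ∩ C = ∅ := by
  have hfam : {M : Set (A → Prop) | S ⊆ M ∧ M ⊆ φ ∧ Sat M}.Finite :=
    hfin.finite_subsets.subset (fun M hM => hM.2.1)
  obtain ⟨M, hM, hmax⟩ := hfam.exists_maximalFor id _ ⟨S, subset_rfl, hS, hsat⟩
  obtain ⟨hSM, hMφ, hMsat⟩ := hM
  have hdiff : φ \ (φ \ M) = M := Set.diff_diff_cancel_left hMφ
  refine ⟨φ \ M, ⟨Set.diff_subset, by rwa [hdiff], ?_⟩, ?_⟩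
  · intro C' hC' hC'sat
    have hMC' : M ⊆ φ \ C' := fun x hx =>
      ⟨hMφ hx, fun hxC' => (hC'.subset hxC').2 hx⟩
    have heq : M = φ \ C' :=
      le_antisymm hMC' (hmax ⟨hSM.trans hMC', Set.diff_subset, hC'sat⟩ hMC')
    obtain ⟨x, hxC, hxC'⟩ := Set.exists_of_ssubset hC'
    exact hxC.2 (heq ▸ ⟨hxC.1, hxC'⟩ : x ∈ M)
  · ext x
    simp only [Set.mem_inter_iff, Set.mem_diff, Set.mem_empty_iff_false, iff_false]
    rintro ⟨hxS, _, hxM⟩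
    exact hxM (hSM hxS)

/-- Hitting set duality, first direction: `U ⊆ φ` is an MUS of `φ` iff it is a
minimal hitting set of the family of all MCSes of `φ`. -/
theorem mus_iff_min_hitting_set_of_mcses {A : Type*} (φ : Set (A → Prop))
    (hfin : φ.Finite) (hunsat : ¬ Sat φ) (U : Set (A → Prop)) (hU : U ⊆ φ) :
    IsMUS φ U ↔ IsMinHittingSet {C | IsMCS φ C} U := by
  constructor
  · rintro ⟨-, hUunsat, hUmin⟩
    constructor
    · intro C hC
      by_contra hne
      rw [Set.not_nonempty_iff_eq_empty] at hne
      have hsub : U ⊆ φ \ C := fun x hx =>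
        ⟨hU hx, fun hxC => (Set.eq_empty_iff_forall_notMem.mp hne x) ⟨hx, hxC⟩⟩
      exact hUunsat (sat_mono hsub hC.2.1)
    · intro H' hH' hhit
      obtain ⟨c, hcU, hcH'⟩ := Set.exists_of_ssubset hH'
      have hH'sub : H' ⊆ U \ {c} := fun x hx =>
        ⟨hH'.subset hx, fun hxc => hcH' (hxc ▸ hx)⟩
      have hsat : Sat (U \ {c}) := hUmin _ ⟨Set.diff_subset,
        fun h => (h hcU).2 rfl⟩
      have hH'sat : Sat H' := sat_mono hH'sub hsat
      obtain ⟨C, hC, hdisj⟩ := exists_mcs_disjoint hfin (hH'.subset.trans hU) hH'sat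
      obtain ⟨x, hx⟩ := hhit C hC
      exact Set.eq_empty_iff_forall_notMem.mp hdisj x hx
  · rintro ⟨hhit, hmin⟩
    refine ⟨hU, ?_, ?_⟩
    · intro hsat
      obtain ⟨C, hC, hdisj⟩ := exists_mcs_disjoint hfin hU hsat
      obtain ⟨x, hx⟩ := hhit C hC
      exact Set.eq_empty_iff_forall_notMem.mp hdisj x hx
    · intro U' hU'
      by_contra hU'unsat
      refine hmin U' hU' (fun C hC => ?_)
      by_contra hne
      rw [Set.not_nonempty_iff_eq_empty] at hne
      have hsub : U' ⊆ φ \ C := fun x hx =>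
        ⟨hU (hU'.subset hx), fun hxC =>
          (Set.eq_empty_iff_forall_notMem.mp hne x) ⟨hx, hxC⟩⟩
      exact hU'unsat (sat_mono hsub hC.2.1)
end

section
/- In the pigeon-hole problem PHP(p, h) with p > h ≥ 1, a subset U of the constraints {P_1,...,P_p} ∪ {H_1,...,H_h} is a minimal unsatisfiable subset if and only if U consists of all h hole constraints together with exactly h+1 of the pigeon constraints. Consequently, PHP(p, h) has exactly C(p, h+1) MUSes. -/
/-- Pigeon constraint `P_i`: pigeon `i` is placed in at least one hole. -/
def PigeonC (p h : ℕ) (i : Fin p) : (Fin p → Fin h → Bool) → Prop :=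
  fun x => ∃ j : Fin h, x i j = true

/-- Hole constraint `H_j`: hole `j` contains at most one pigeon. -/
def HoleC (p h : ℕ) (j : Fin h) : (Fin p → Fin h → Bool) → Prop :=
  fun x => ∀ i₁ i₂ : Fin p, x i₁ j = true → x i₂ j = true → i₁ = i₂

/-- The full pigeon-hole constraint set. -/
def PHP (p h : ℕ) : Set ((Fin p → Fin h → Bool) → Prop) :=
  Set.range (PigeonC p h) ∪ Set.range (HoleC p h)

section Aux

variable {p h : ℕ}

lemma pigeonC_ne_holeC (i : Fin p) (j : Fin h) : PigeonC p h i ≠ HoleC p h j := by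
  intro he
  have h1 : HoleC p h j (fun _ _ => false) := by
    intro i₁ i₂ h1 h2
    simp at h1
  rw [← he] at h1
  obtain ⟨j', hj'⟩ := h1
  simp at hj'

lemma pigeonC_injective (hh : 1 ≤ h) : Function.Injective (PigeonC p h) := by
  intro i i' he
  have h1 : PigeonC p h i (fun a _ => decide (a = i)) := ⟨⟨0, hh⟩, by simp⟩
  rw [he] at h1
  obtain ⟨j, hj⟩ := h1
  simp only [decide_eq_true_eq] at hj
  exact hj.symm

/-- If some hole constraint is missing, the set is satisfiable (put all pigeons there). -/
lemma satA {U : Set ((Fin p → Fin h → Bool) → Prop)} (hU : U ⊆ PHP p h)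
    (j₀ : Fin h) (hj₀ : HoleC p h j₀ ∉ U) : Sat U := by
  refine ⟨fun _ j => decide (j = j₀), fun c hc => ?_⟩
  rcases hU hc with ⟨i, rfl⟩ | ⟨j, rfl⟩
  · exact ⟨j₀, by simp⟩
  · intro i₁ i₂ h1 h2
    simp only [decide_eq_true_eq] at h1
    subst h1
    exact absurd hc hj₀

/-- If at most `h` pigeon constraints appear, the set is satisfiable. -/
lemma satB (J : Finset (Fin p)) (hcard : J.card ≤ h)
    {U : Set ((Fin p → Fin h → Bool) → Prop)}
    (hU : U ⊆ Set.range (HoleC p h) ∪ PigeonC p h '' ↑J) : Sat U := by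
  have hle : Fintype.card {x // x ∈ J} ≤ Fintype.card (Fin h) := by simpa using hcard
  obtain ⟨f⟩ := Function.Embedding.nonempty_of_card_le hle
  refine ⟨fun i j => if hm : i ∈ J then decide (f ⟨i, hm⟩ = j) else false,
    fun c hc => ?_⟩
  rcases hU hc with ⟨j, rfl⟩ | ⟨i, hi, rfl⟩
  · intro i₁ i₂ h1 h2
    dsimp only at h1 h2
    split_ifs at h1 h2 with m1 m2
    · simp only [decide_eq_true_eq] at h1 h2
      have := f.injective (h1.trans h2.symm)
      exact congrArg Subtype.val this
  · have hi' : i ∈ J := hi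
    exact ⟨f ⟨i, hi'⟩, by simp [hi']⟩

/-- With all hole constraints and more than `h` pigeon constraints: unsatisfiable. -/
lemma unsatC (I : Finset (Fin p)) (hcard : h + 1 ≤ I.card) :
    ¬ Sat (Set.range (HoleC p h) ∪ PigeonC p h '' ↑I) := by
  rintro ⟨a, ha⟩
  have hp : ∀ i ∈ I, ∃ j, a i j = true := fun i hi =>
    ha (PigeonC p h i) (Or.inr ⟨i, hi, rfl⟩)
  choose f hf using hp
  have hh' : 1 ≤ h := by
    obtain ⟨i, hi⟩ := Finset.card_pos.mp (lt_of_lt_of_le (Nat.succ_pos h) hcard)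
    exact (f i hi).pos
  let f' : Fin p → Fin h := fun i => if hi : i ∈ I then f i hi else ⟨0, hh'⟩
  have hcle : I.card ≤ (Finset.univ : Finset (Fin h)).card := by
    apply Finset.card_le_card_of_injOn f' (fun a _ => Finset.mem_univ _)
    intro i₁ hi₁ i₂ hi₂ he
    simp only [Finset.mem_coe] at hi₁ hi₂
    simp only [f', dif_pos hi₁, dif_pos hi₂] at he
    have hhole := ha (HoleC p h (f i₁ hi₁)) (Or.inl ⟨f i₁ hi₁, rfl⟩)
    exact hhole i₁ i₂ (hf i₁ hi₁) (he ▸ hf i₂ hi₂)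
  simp only [Finset.card_univ, Fintype.card_fin] at hcle
  omega

lemma form_subset (I : Finset (Fin p)) :
    Set.range (HoleC p h) ∪ PigeonC p h '' ↑I ⊆ PHP p h :=
  Set.union_subset Set.subset_union_right
    ((Set.image_subset_range _ _).trans Set.subset_union_left)

lemma mus_form (hh : 1 ≤ h) (I : Finset (Fin p)) (hI : I.card = h + 1) :
    IsMUS (PHP p h) (Set.range (HoleC p h) ∪ PigeonC p h '' ↑I) := by
  refine ⟨form_subset I, unsatC I (le_of_eq hI.symm), ?_⟩
  · intro U' hU'
    have hsub := hU'.subset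
    obtain ⟨c, hcU, hcU'⟩ := Set.exists_of_ssubset hU'
    rcases hcU with ⟨j₀, rfl⟩ | ⟨i, hi, rfl⟩
    · exact satA (hsub.trans (form_subset I)) j₀ hcU'
    · refine satB (I.erase i) (by simp [Finset.card_erase_of_mem hi, hI]) ?_
      intro d hd
      rcases hsub hd with ⟨j, rfl⟩ | ⟨i', hi', hde⟩
      · exact Or.inl ⟨j, rfl⟩
      · refine Or.inr ⟨i', Finset.mem_erase.mpr ⟨?_, hi'⟩, hde⟩
        rintro rfl
        exact hcU' (hde ▸ hd)

lemma mem_iff_pigeon (hh : 1 ≤ h) (I : Finset (Fin p)) (i : Fin p) :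
    PigeonC p h i ∈ Set.range (HoleC p h) ∪ PigeonC p h '' ↑I ↔ i ∈ I := by
  constructor
  · rintro (⟨j, hj⟩ | ⟨i', hi', he⟩)
    · exact absurd hj.symm (pigeonC_ne_holeC i j)
    · exact (pigeonC_injective hh he) ▸ hi'
  · intro hi
    exact Or.inr ⟨i, hi, rfl⟩

lemma mus_iff (hh : 1 ≤ h) {U : Set ((Fin p → Fin h → Bool) → Prop)}
    (hU : U ⊆ PHP p h) :
    IsMUS (PHP p h) U ↔ ∃ I : Finset (Fin p), I.card = h + 1 ∧
      U = Set.range (HoleC p h) ∪ PigeonC p h '' ↑I := by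
  classical
  constructor
  · rintro ⟨-, hunsat, hmin⟩
    have hholes : Set.range (HoleC p h) ⊆ U := by
      rintro _ ⟨j₀, rfl⟩
      by_contra hj₀
      exact hunsat (satA hU j₀ hj₀)
    set I : Finset (Fin p) := Finset.univ.filter (fun i => PigeonC p h i ∈ U)
      with hIdef
    have hUeq : U = Set.range (HoleC p h) ∪ PigeonC p h '' ↑I := by
      apply Set.Subset.antisymm
      · intro c hc
        rcases hU hc with ⟨i, rfl⟩ | ⟨j, rfl⟩
        · exact Or.inr ⟨i, by simp [hIdef, hc], rfl⟩
        · exact Or.inl ⟨j, rfl⟩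
      · refine Set.union_subset hholes ?_
        rintro _ ⟨i, hi, rfl⟩
        simp only [hIdef, Finset.coe_filter, Set.mem_setOf_eq,
          Finset.mem_univ, true_and] at hi
        exact hi
    have hge : h + 1 ≤ I.card := by
      by_contra hlt
      push_neg at hlt
      exact hunsat (satB I (by omega) (le_of_eq hUeq))
    have hle : I.card ≤ h + 1 := by
      by_contra hgt
      push_neg at hgt
      obtain ⟨I', hI'sub, hI'card⟩ := Finset.exists_subset_card_eq (show h + 1 ≤ I.card by omega)
      have hss : (I' : Finset (Fin p)) ⊂ I :=
        hI'sub.ssubset_of_ne (fun he => by rw [he] at hI'card; omega)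
      obtain ⟨i, hiI, hiI'⟩ := Finset.exists_of_ssubset hss
      have hU'ss : Set.range (HoleC p h) ∪ PigeonC p h '' ↑I' ⊂ U := by
        rw [hUeq]
        constructor
        · exact Set.union_subset Set.subset_union_left
            ((Set.image_mono (by exact_mod_cast hI'sub)).trans
              Set.subset_union_right)
        · intro hcon
          have : PigeonC p h i ∈ Set.range (HoleC p h) ∪ PigeonC p h '' ↑I' :=
            hcon (Or.inr ⟨i, hiI, rfl⟩)
          exact hiI' ((mem_iff_pigeon hh I' i).mp this)
      exact unsatC I' (le_of_eq hI'card.symm) (hmin _ hU'ss)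
    exact ⟨I, by omega, hUeq⟩
  · rintro ⟨I, hIc, rfl⟩
    exact mus_form hh I hIc

end Aux

/-- The MUSes of PHP(p,h) are exactly the sets consisting of all `h` hole constraints
together with exactly `h+1` pigeon constraints; hence there are `C(p, h+1)` MUSes. -/
theorem php_muses (p h : ℕ) (hh : 1 ≤ h) (hph : h < p) :
    (∀ U ⊆ PHP p h,
      (IsMUS (PHP p h) U ↔
        ∃ I : Finset (Fin p), I.card = h + 1 ∧
          U = Set.range (HoleC p h) ∪ (PigeonC p h '' ↑I))) ∧
    {U | IsMUS (PHP p h) U}.ncard = p.choose (h + 1) := by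
  refine ⟨fun U hU => mus_iff hh hU, ?_⟩
  have hset : {U | IsMUS (PHP p h) U} =
      (fun I : Finset (Fin p) => Set.range (HoleC p h) ∪ PigeonC p h '' ↑I) ''
        {I : Finset (Fin p) | I.card = h + 1} := by
    ext U
    simp only [Set.mem_setOf_eq, Set.mem_image]
    constructor
    · intro hm
      obtain ⟨I, hc, he⟩ := (mus_iff hh hm.1).mp hm
      exact ⟨I, hc, he.symm⟩
    · rintro ⟨I, hc, rfl⟩
      exact mus_form hh I hc
  have hinj : Set.InjOn
      (fun I : Finset (Fin p) => Set.range (HoleC p h) ∪ PigeonC p h '' ↑I)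
      {I : Finset (Fin p) | I.card = h + 1} := by
    intro I hI I' hI' he
    ext i
    rw [← mem_iff_pigeon hh I i, ← mem_iff_pigeon hh I' i]
    simp only at he
    rw [he]
  rw [hset, Set.ncard_image_of_injOn hinj]
  have : {I : Finset (Fin p) | I.card = h + 1} =
      ↑(Finset.powersetCard (h + 1) (Finset.univ : Finset (Fin p))) := by
    ext I
    simp [Finset.mem_powersetCard, Finset.subset_univ]
  rw [this, Set.ncard_coe_finset, Finset.card_powersetCard, Finset.card_univ,
    Fintype.card_fin]
end

section
/- Let φ be a finite unsatisfiable set of constraints and let H ⊆ φ be a hitting set of the family of all MCSes of φ. Then H is unsatisfiable if and only if H contains an MUS of φ; moreover, if H is a minimal hitting set of all MCSes, then H is unsatisfiable. -/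
lemma exists_min_subset_aux {K : Type*} :
    ∀ (n : ℕ) (S : Set K) (hS : S.Finite), hS.toFinset.card ≤ n →
    ∀ (Q : Set K → Prop), Q S → ∃ T, T ⊆ S ∧ Q T ∧ ∀ T' ⊂ T, ¬ Q T' := by
  intro n
  induction n with
  | zero =>
    intro S hS hcard Q hQ
    refine ⟨S, subset_rfl, hQ, ?_⟩
    have : S = ∅ := by
      have := Set.Finite.toFinset_eq_empty.mp (Finset.card_eq_zero.mp (Nat.le_zero.mp hcard))
      exact this
    intro T' hT'
    rw [this] at hT'
    exact absurd (Set.empty_subset T') hT'.2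
  | succ n ih =>
    intro S hS hcard Q hQ
    by_cases h : ∀ T' ⊂ S, ¬ Q T'
    · exact ⟨S, subset_rfl, hQ, h⟩
    · push_neg at h
      obtain ⟨T', hT'S, hQT'⟩ := h
      have hT'fin : T'.Finite := hS.subset hT'S.subset
      have hlt : hT'fin.toFinset.card < hS.toFinset.card := by
        apply Finset.card_lt_card
        simpa [Set.Finite.toFinset_ssubset_toFinset] using hT'S
      obtain ⟨T, hTS, hQT, hmin⟩ := ih T' hT'fin (by omega) Q hQT'
      exact ⟨T, hTS.trans hT'S.subset, hQT, hmin⟩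

lemma exists_min_subset {K : Type*} {S : Set K} (hS : S.Finite) {Q : Set K → Prop}
    (hQ : Q S) : ∃ T, T ⊆ S ∧ Q T ∧ ∀ T' ⊂ T, ¬ Q T' :=
  exists_min_subset_aux hS.toFinset.card S hS le_rfl Q hQ


/-- For a hitting set `H ⊆ φ` of all MCSes of a finite unsatisfiable `φ`: `H` is
unsatisfiable iff it contains an MUS of `φ`; and if `H` is a *minimal* hitting set
of all MCSes, then `H` is unsatisfiable. -/
theorem hitting_set_unsat_iff_contains_mus {A : Type*} (φ : Set (A → Prop))
    (hfin : φ.Finite) (hunsat : ¬ Sat φ)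
    (H : Set (A → Prop)) (hH : H ⊆ φ)
    (hhit : IsHittingSet {C | IsMCS φ C} H) :
    (¬ Sat H ↔ ∃ U ⊆ H, IsMUS φ U) ∧
    (IsMinHittingSet {C | IsMCS φ C} H → ¬ Sat H) := by
  have key : ¬ Sat H := by
    rintro ⟨a, ha⟩
    set C₀ : Set (A → Prop) := {c ∈ φ | ¬ c a} with hC₀
    have hQ : C₀ ⊆ φ ∧ Sat (φ \ C₀) := by
      refine ⟨Set.sep_subset _ _, ⟨a, fun c hc => ?_⟩⟩
      by_contra hna
      exact hc.2 ⟨hc.1, hna⟩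
    obtain ⟨C, hCsub, ⟨hCφ, hCsat⟩, hmin⟩ :=
      exists_min_subset (Q := fun T => T ⊆ φ ∧ Sat (φ \ T)) (hfin.subset (Set.sep_subset _ _)) hQ
    have hMCS : IsMCS φ C :=
      ⟨hCφ, hCsat, fun C' hC' hs => hmin C' hC' ⟨hC'.subset.trans hCφ, hs⟩⟩
    obtain ⟨x, hxH, hxC⟩ := hhit C hMCS
    exact (hCsub hxC).2 (ha x hxH)
  refine ⟨⟨fun hns => ?_, fun ⟨U, hUH, _, hUun, _⟩ ⟨a, ha⟩ =>
    hUun ⟨a, fun c hc => ha c (hUH hc)⟩⟩, fun _ => key⟩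
  obtain ⟨U, hUH, hUun, hmin⟩ := exists_min_subset (Q := fun T => ¬ Sat T) (hfin.subset hH) hns
  exact ⟨U, hUH, hUH.trans hH, hUun, fun U' hU' => not_not.mp (hmin U' hU')⟩
end
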